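/- Let (V,ω) be a symplectic vector space. For each p ≥ 2, the map r_p^ω: Λ^p V* ⊗ Λ²V* → Λ^{p+1}V* ⊗ V (defined via contraction and ω^{-1} as above) is sp(V,ω)-equivariant: for every A ∈ sp(V,ω), r_p^ω(A·ξ) = A·r_p^ω(ξ) for all ξ ∈ Λ^p V* ⊗ Λ²V*, where A acts by the natural tensor representation. -/

import Mathlib

/-!
The natural action of `A ∈ 𝔤𝔩(V)` on forms is `-D_A` with `(D_A α)(v₁, …) = ∑ᵢ α(v₁, …, A vᵢ, …)`.
Alternatizing the Leibniz rule for tensor products of multilinear maps shows that `D_A` is a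
derivation of the wedge product; moreover `D_A ι_x = ι_x D_A - ι_{A x}`. So `D_A` commutes with the
summand `φ_{α,τ}(x) = (1/(p+1)) α ∧ ι_x τ - c ι_x α ∧ τ` of `r_p^ω` up to the term `φ_{α,τ}(A x)`.
After tensoring with `ω⁻¹(eⁱ)` and summing over the basis, these terms are the action of `A` on the
first factor of the bivector `ω⁻¹ = ∑ᵢ eᵢ ⊗ ω⁻¹(eⁱ)`, and they cancel the action on its second
factor because `ω⁻¹` is `𝔰𝔭(V, ω)`-invariant.
-/

variable {V : Type*} [AddCommGroup V] [Module ℝ V]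

/-- The wedge product of scalar-valued alternating forms (determinant convention). -/
noncomputable def wedgeForm {p q : ℕ} (a : V [⋀^Fin p]→ₗ[ℝ] ℝ) (b : V [⋀^Fin q]→ₗ[ℝ] ℝ) :
    V [⋀^Fin (p + q)]→ₗ[ℝ] ℝ :=
  ((TensorProduct.lid ℝ ℝ).toLinearMap.compAlternatingMap (a.domCoprod b)).domDomCongr
    finSumFinEquiv

theorem wedgeForm_add_left {p q : ℕ} (a a' : V [⋀^Fin p]→ₗ[ℝ] ℝ) (c : V [⋀^Fin q]→ₗ[ℝ] ℝ) :
    wedgeForm (a + a') c = wedgeForm a c + wedgeForm a' c := by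
  unfold wedgeForm
  rw [show (a + a').domCoprod c = a.domCoprod c + a'.domCoprod c from by
    rw [← AlternatingMap.domCoprod'_apply, ← AlternatingMap.domCoprod'_apply,
      ← AlternatingMap.domCoprod'_apply, ← map_add, ← TensorProduct.add_tmul]]
  rw [LinearMap.compAlternatingMap_add, AlternatingMap.domDomCongr_add]

theorem wedgeForm_smul_left {p q : ℕ} (r : ℝ) (a : V [⋀^Fin p]→ₗ[ℝ] ℝ)
    (c : V [⋀^Fin q]→ₗ[ℝ] ℝ) : wedgeForm (r • a) c = r • wedgeForm a c := by
  unfold wedgeForm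
  rw [show (r • a).domCoprod c = r • a.domCoprod c from by
    rw [← AlternatingMap.domCoprod'_apply, ← AlternatingMap.domCoprod'_apply,
      ← map_smul, TensorProduct.smul_tmul']]
  rw [LinearMap.compAlternatingMap_smul, AlternatingMap.domDomCongr_smul]

theorem wedgeForm_add_right {p q : ℕ} (a : V [⋀^Fin p]→ₗ[ℝ] ℝ) (c c' : V [⋀^Fin q]→ₗ[ℝ] ℝ) :
    wedgeForm a (c + c') = wedgeForm a c + wedgeForm a c' := by
  unfold wedgeForm
  rw [show a.domCoprod (c + c') = a.domCoprod c + a.domCoprod c' from by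
    rw [← AlternatingMap.domCoprod'_apply, ← AlternatingMap.domCoprod'_apply,
      ← AlternatingMap.domCoprod'_apply, ← map_add, ← TensorProduct.tmul_add]]
  rw [LinearMap.compAlternatingMap_add, AlternatingMap.domDomCongr_add]

theorem wedgeForm_smul_right {p q : ℕ} (r : ℝ) (a : V [⋀^Fin p]→ₗ[ℝ] ℝ)
    (c : V [⋀^Fin q]→ₗ[ℝ] ℝ) : wedgeForm a (r • c) = r • wedgeForm a c := by
  unfold wedgeForm
  rw [show a.domCoprod (r • c) = r • a.domCoprod c from by
    rw [← AlternatingMap.domCoprod'_apply, ← AlternatingMap.domCoprod'_apply,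
      ← map_smul, ← TensorProduct.tmul_smul]]
  rw [LinearMap.compAlternatingMap_smul, AlternatingMap.domDomCongr_smul]

/-- The natural (tensor/derivation) action of `g ∈ gl(V)` on `(k+1)`-forms:
`(g·α)(v₁,…) = −Σᵢ α(v₁,…,g vᵢ,…)`, realized via alternatization. -/
noncomputable def formAct {k : ℕ} (g : V →ₗ[ℝ] V) :
    (V [⋀^Fin (k + 1)]→ₗ[ℝ] ℝ) →ₗ[ℝ] (V [⋀^Fin (k + 1)]→ₗ[ℝ] ℝ) where
  toFun α := -(((Nat.factorial k : ℝ))⁻¹ •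
    MultilinearMap.alternatization
      ((MultilinearMap.compLinearMapₗ
          (fun j : Fin (k + 1) => if j = 0 then g else LinearMap.id))
        α.toMultilinearMap))
  map_add' α β := by
    show -(((Nat.factorial k : ℝ))⁻¹ • MultilinearMap.alternatization
        ((MultilinearMap.compLinearMapₗ (fun j : Fin (k + 1) => if j = 0 then g else LinearMap.id))
          (α.toMultilinearMap + β.toMultilinearMap))) = _
    rw [map_add, map_add, smul_add, neg_add]
  map_smul' c α := by
    have h2 : ∀ m : MultilinearMap ℝ (fun _ : Fin (k + 1) => V) ℝ,
        MultilinearMap.alternatization (c • m) = c • MultilinearMap.alternatization m := by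
      intro m
      ext v
      simp [MultilinearMap.alternatization_apply, Finset.mul_sum, mul_smul_comm,
        MultilinearMap.smul_apply]
    show -(((Nat.factorial k : ℝ))⁻¹ • MultilinearMap.alternatization
        ((MultilinearMap.compLinearMapₗ (fun j : Fin (k + 1) => if j = 0 then g else LinearMap.id))
          (c • α.toMultilinearMap))) = _
    rw [map_smul, h2]
    show -(((Nat.factorial k : ℝ))⁻¹ • c • _) = c • -(((Nat.factorial k : ℝ))⁻¹ • _)
    rw [smul_comm, smul_neg]

/-- `r_p^ω` as a linear map `Λ^{p}V* ⊗ Λ²V* → Λ^{p+1}V* ⊗ V`, for `p = m+2 ≥ 2`: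
`r_p^ω(α⊗τ) = (1/(p+1) α∧ι_{eᵢ}τ − (−1)^p/(p(p+1)) ι_{eᵢ}α∧τ) ⊗ ω⁻¹(eⁱ)`. -/
noncomputable def rOmega [FiniteDimensional ℝ V] (ω : V →ₗ[ℝ] V →ₗ[ℝ] ℝ) {n : ℕ}
    (b : Module.Basis (Fin n) ℝ V) (sharp : (V →ₗ[ℝ] ℝ) → V) (m : ℕ) :
    TensorProduct ℝ (V [⋀^Fin (m + 2)]→ₗ[ℝ] ℝ) (V [⋀^Fin 2]→ₗ[ℝ] ℝ) →ₗ[ℝ]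
      TensorProduct ℝ (V [⋀^Fin (m + 3)]→ₗ[ℝ] ℝ) V :=
  TensorProduct.lift
    (LinearMap.mk₂ ℝ
      (fun α τ => ∑ i : Fin n,
        (((((m : ℝ) + 3)⁻¹ • wedgeForm α (τ.curryLeft (b i)) -
            (((-1 : ℝ) ^ m) / (((m : ℝ) + 2) * ((m : ℝ) + 3))) •
              wedgeForm (α.curryLeft (b i)) τ) :
            V [⋀^Fin (m + 3)]→ₗ[ℝ] ℝ)) ⊗ₜ[ℝ] sharp (b.coord i))
      (by
        intro α α' τ
        rw [← Finset.sum_add_distrib]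
        refine Finset.sum_congr rfl fun i _ => ?_
        rw [wedgeForm_add_left, AlternatingMap.curryLeft_add, LinearMap.add_apply,
          wedgeForm_add_left, ← TensorProduct.add_tmul]
        congr 1
        module)
      (by
        intro c α τ
        rw [Finset.smul_sum]
        refine Finset.sum_congr rfl fun i _ => ?_
        rw [wedgeForm_smul_left, AlternatingMap.curryLeft_smul, LinearMap.smul_apply,
          wedgeForm_smul_left, TensorProduct.smul_tmul']
        congr 1
        module)
      (by
        intro α τ τ'
        rw [← Finset.sum_add_distrib]
        refine Finset.sum_congr rfl fun i _ => ?_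
        rw [AlternatingMap.curryLeft_add, LinearMap.add_apply, wedgeForm_add_right,
          wedgeForm_add_right, ← TensorProduct.add_tmul]
        congr 1
        module)
      (by
        intro c α τ
        rw [Finset.smul_sum]
        refine Finset.sum_congr rfl fun i _ => ?_
        rw [AlternatingMap.curryLeft_smul, LinearMap.smul_apply, wedgeForm_smul_right,
          wedgeForm_smul_right, TensorProduct.smul_tmul']
        congr 1
        module))

namespace MultilinearMap

variable {R M N N' ι ι' : Type*} [CommRing R] [AddCommGroup M] [Module R M]
  [AddCommGroup N] [Module R N] [AddCommGroup N'] [Module R N']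
  [Fintype ι] [DecidableEq ι] [Fintype ι'] [DecidableEq ι']

/-- The natural action of `g ∈ 𝔤𝔩(M)` on multilinear maps is `-slotSum g`. -/
noncomputable def slotSum (g : M →ₗ[R] M) :
    MultilinearMap R (fun _ : ι => M) N →ₗ[R] MultilinearMap R (fun _ : ι => M) N :=
  ∑ i, compLinearMapₗ (Function.update (fun _ => LinearMap.id) i g)

theorem slotSum_apply (g : M →ₗ[R] M) (f : MultilinearMap R (fun _ : ι => M) N) (v : ι → M) :
    slotSum g f v = ∑ i, f (Function.update v i (g (v i))) := by
  rw [slotSum, LinearMap.sum_apply, sum_apply]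
  refine Finset.sum_congr rfl fun i _ => congrArg f (funext fun j => ?_)
  rcases eq_or_ne j i with rfl | hj <;> simp [*]

theorem slotSum_domDomCongr (g : M →ₗ[R] M) (e : ι ≃ ι')
    (f : MultilinearMap R (fun _ : ι => M) N) :
    slotSum g (f.domDomCongr e) = (slotSum g f).domDomCongr e := by
  ext v
  simp only [slotSum_apply, domDomCongr_apply]
  refine Fintype.sum_equiv e.symm _ _ fun i => congrArg f ?_
  rw [e.apply_symm_apply]
  exact Function.update_comp_equiv v e i _

theorem slotSum_alternatization (g : M →ₗ[R] M) (f : MultilinearMap R (fun _ : ι => M) N) :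
    slotSum g (alternatization f : MultilinearMap R (fun _ : ι => M) N)
      = alternatization (slotSum g f) := by
  simp only [alternatization_coe, _root_.map_sum, Units.smul_def, map_zsmul, slotSum_domDomCongr]

theorem slotSum_domCoprod {ιa ιb : Type*} [Fintype ιa] [DecidableEq ιa] [Fintype ιb]
    [DecidableEq ιb] (g : M →ₗ[R] M) (a : MultilinearMap R (fun _ : ιa => M) N)
    (c : MultilinearMap R (fun _ : ιb => M) N') :
    slotSum g (a.domCoprod c) = (slotSum g a).domCoprod c + a.domCoprod (slotSum g c) := by
  ext v
  simp only [slotSum_apply, domCoprod_apply, add_apply, Fintype.sum_sum_type,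
    TensorProduct.sum_tmul, TensorProduct.tmul_sum]
  congr 2 <;> ext i
  · rw [Function.update_comp_eq_of_injective' _ Sum.inl_injective,
      Function.update_comp_eq_of_forall_ne' _ _ fun _ => Sum.inr_ne_inl]
  · rw [Function.update_comp_eq_of_injective' _ Sum.inr_injective,
      Function.update_comp_eq_of_forall_ne' _ _ fun _ => Sum.inl_ne_inr]

theorem alternatization_domDomCongr (f : MultilinearMap R (fun _ : ι => M) N)
    (σ : Equiv.Perm ι) :
    alternatization (f.domDomCongr σ) = Equiv.Perm.sign σ • alternatization f := by
  ext v
  rw [alternatization_apply, AlternatingMap.smul_apply, alternatization_apply, Finset.smul_sum]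
  refine Fintype.sum_equiv (Equiv.mulRight σ) _ _ fun τ => ?_
  rw [Equiv.coe_mulRight, Equiv.Perm.sign_mul, smul_smul, mul_left_comm, Int.units_mul_self,
    mul_one]
  rfl

end MultilinearMap

namespace AlternatingMap

section CommRing

variable {R M N N' ι ι' : Type*} [CommRing R] [AddCommGroup M] [Module R M]
  [AddCommGroup N] [Module R N] [AddCommGroup N'] [Module R N']
  [Fintype ι] [DecidableEq ι] [Fintype ι'] [DecidableEq ι']

theorem slotSum_map_eq_zero_of_eq (g : M →ₗ[R] M) (α : M [⋀^ι]→ₗ[R] N) {v : ι → M} {i j : ι}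
    (hv : v i = v j) (hij : i ≠ j) : MultilinearMap.slotSum g α.toMultilinearMap v = 0 := by
  rw [MultilinearMap.slotSum_apply, coe_multilinearMap,
    Fintype.sum_eq_add i j hij fun k ⟨hki, hkj⟩ =>
      α.map_eq_zero_of_eq _ (by simp [Function.update_of_ne, hki.symm, hkj.symm, hv]) hij]
  have hswap : Function.update v j (g (v j)) = Function.update v i (g (v i)) ∘ Equiv.swap i j := by
    rw [Function.update_comp_equiv, Equiv.symm_swap, Equiv.swap_apply_left, hv]
    congr 1
    exact (funext (Equiv.apply_swap_eq_self hv)).symm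
  rw [hswap, α.map_swap _ hij, add_neg_cancel]

noncomputable def slotSum (g : M →ₗ[R] M) : (M [⋀^ι]→ₗ[R] N) →ₗ[R] (M [⋀^ι]→ₗ[R] N) where
  toFun α :=
    { MultilinearMap.slotSum g α.toMultilinearMap with
      map_eq_zero_of_eq' := fun _ _ _ => slotSum_map_eq_zero_of_eq g α }
  map_add' α β := by ext; simp [MultilinearMap.slotSum_apply, Finset.sum_add_distrib]
  map_smul' c α := by ext; simp [MultilinearMap.slotSum_apply, Finset.smul_sum]

@[simp] theorem coe_slotSum (g : M →ₗ[R] M) (α : M [⋀^ι]→ₗ[R] N) :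
    (slotSum g α : MultilinearMap R (fun _ : ι => M) N) = MultilinearMap.slotSum g α := rfl

theorem slotSum_apply (g : M →ₗ[R] M) (α : M [⋀^ι]→ₗ[R] N) (v : ι → M) :
    slotSum g α v = ∑ i, α (Function.update v i (g (v i))) :=
  MultilinearMap.slotSum_apply g α.toMultilinearMap v

theorem slotSum_domDomCongr (g : M →ₗ[R] M) (e : ι ≃ ι') (α : M [⋀^ι]→ₗ[R] N) :
    slotSum g (α.domDomCongr e) = (slotSum g α).domDomCongr e :=
  coe_multilinearMap_injective <| by
    simp only [coe_slotSum, coe_domDomCongr, MultilinearMap.slotSum_domDomCongr]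

theorem slotSum_compAlternatingMap (g : M →ₗ[R] M) (L : N →ₗ[R] N') (α : M [⋀^ι]→ₗ[R] N) :
    slotSum g (L.compAlternatingMap α) = L.compAlternatingMap (slotSum g α) := by
  ext v
  simp [slotSum_apply]

theorem slotSum_alternatization (g : M →ₗ[R] M) (f : MultilinearMap R (fun _ : ι => M) N) :
    slotSum g (MultilinearMap.alternatization f)
      = MultilinearMap.alternatization (MultilinearMap.slotSum g f) :=
  coe_multilinearMap_injective <| by
    rw [coe_slotSum, MultilinearMap.slotSum_alternatization]

theorem curryLeft_neg {n : ℕ} (f : M [⋀^Fin (n + 1)]→ₗ[R] N) : (-f).curryLeft = -f.curryLeft :=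
  rfl

theorem slotSum_curryLeft {n : ℕ} (g : M →ₗ[R] M) (f : M [⋀^Fin (n + 1)]→ₗ[R] N) (x : M) :
    slotSum g (f.curryLeft x) = (slotSum g f).curryLeft x - f.curryLeft (g x) := by
  rw [eq_sub_iff_add_eq]
  ext v
  simp only [curryLeft_apply_apply, add_apply, slotSum_apply, Fin.sum_univ_succ, Matrix.vecCons,
    Fin.update_cons_zero, ← Fin.cons_update, Fin.cons_zero, Fin.cons_succ]
  rw [add_comm]

theorem domDomCongr_compLinearMap_update (α : M [⋀^ι]→ₗ[R] N) (g : M →ₗ[R] M) (i : ι)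
    (σ : Equiv.Perm ι) :
    (α.toMultilinearMap.compLinearMap (Function.update (fun _ => LinearMap.id) i g)).domDomCongr σ
      = Equiv.Perm.sign σ •
          α.toMultilinearMap.compLinearMap (Function.update (fun _ => LinearMap.id) (σ i) g) := by
  ext v
  change α (fun j => Function.update (fun _ => LinearMap.id) i g j (v (σ j)))
    = Equiv.Perm.sign σ • α (fun j => Function.update (fun _ => LinearMap.id) (σ i) g j (v j))
  rw [← α.map_perm _ σ]
  congr 1
  funext j
  simp [Function.update_apply, σ.injective.eq_iff]

theorem alternatization_compLinearMap_update_eq (α : M [⋀^ι]→ₗ[R] N) (g : M →ₗ[R] M)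
    (i j : ι) :
    MultilinearMap.alternatization
        (α.toMultilinearMap.compLinearMap (Function.update (fun _ => LinearMap.id) i g))
      = MultilinearMap.alternatization
          (α.toMultilinearMap.compLinearMap (Function.update (fun _ => LinearMap.id) j g)) := by
  have h := congrArg MultilinearMap.alternatization
    (domDomCongr_compLinearMap_update α g i (Equiv.swap i j))
  rwa [MultilinearMap.alternatization_domDomCongr, map_zsmul_unit, Equiv.swap_apply_left,
    smul_left_cancel_iff] at h

theorem card_smul_alternatization_compLinearMap_update (α : M [⋀^ι]→ₗ[R] N)
    (g : M →ₗ[R] M) (i : ι) :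
    Fintype.card ι • MultilinearMap.alternatization
        (α.toMultilinearMap.compLinearMap (Function.update (fun _ => LinearMap.id) i g))
      = (Fintype.card ι).factorial • slotSum g α := by
  rw [← coe_alternatization, coe_slotSum, MultilinearMap.slotSum, LinearMap.sum_apply, map_sum]
  simp only [MultilinearMap.compLinearMapₗ_apply,
    alternatization_compLinearMap_update_eq α g _ i, Finset.sum_const, Finset.card_univ]

end CommRing

section CharZero

variable {K M N N' : Type*} [Field K] [CharZero K] [AddCommGroup M] [Module K M]
  [AddCommGroup N] [Module K N] [AddCommGroup N'] [Module K N']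

theorem slotSum_domCoprod {ιa ιb : Type*} [Fintype ιa] [DecidableEq ιa] [Fintype ιb]
    [DecidableEq ιb] (g : M →ₗ[K] M) (a : M [⋀^ιa]→ₗ[K] N) (c : M [⋀^ιb]→ₗ[K] N') :
    slotSum g (a.domCoprod c) = (slotSum g a).domCoprod c + a.domCoprod (slotSum g c) := by
  have h := congrArg (slotSum g) (MultilinearMap.domCoprod_alternization_eq a c)
  rw [slotSum_alternatization, MultilinearMap.slotSum_domCoprod, map_add, ← coe_slotSum,
    ← coe_slotSum, MultilinearMap.domCoprod_alternization_eq,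
    MultilinearMap.domCoprod_alternization_eq, map_nsmul, ← smul_add,
    ← Nat.cast_smul_eq_nsmul K, ← Nat.cast_smul_eq_nsmul K] at h
  exact smul_right_injective _ (Nat.cast_ne_zero.mpr (by positivity)) h.symm

end CharZero

end AlternatingMap

section Symplectic

variable {R M N ι : Type*} [CommRing R] [AddCommGroup M] [Module R M] [AddCommGroup N]
  [Module R N] [Fintype ι]

/-- The bivector `ω⁻¹ = ∑ᵢ eᵢ ⊗ ♯eⁱ`; it does not depend on the basis `e`. -/
noncomputable def sharpBivector (b : Module.Basis ι R M) (sharp : (M →ₗ[R] R) → N) :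
    TensorProduct R M N :=
  ∑ i, b i ⊗ₜ sharp (b.coord i)

theorem exists_linearMap_coe_eq_of_nondegenerate (ω : M →ₗ[R] M →ₗ[R] R)
    (hnondeg : ∀ x : M, (∀ y : M, ω x y = 0) → x = 0) (sharp : (M →ₗ[R] R) → M)
    (hsharp : ∀ (f : M →ₗ[R] R) (x : M), ω (sharp f) x = f x) :
    ∃ s : (M →ₗ[R] R) →ₗ[R] M, ⇑s = sharp := by
  have hinj : Function.Injective ω :=
    (injective_iff_map_eq_zero ω).mpr fun x hx => hnondeg x fun y => by simp [hx]
  have hinv : Function.RightInverse sharp ω := fun f => LinearMap.ext (hsharp f)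
  refine ⟨(LinearEquiv.ofBijective ω ⟨hinj, hinv.surjective⟩).symm.toLinearMap,
    funext fun f => hinj ?_⟩
  rw [hinv f]
  exact (LinearEquiv.ofBijective ω _).apply_symm_apply f

theorem sharp_comp_eq_neg (ω : M →ₗ[R] M →ₗ[R] R)
    (hnondeg : ∀ x : M, (∀ y : M, ω x y = 0) → x = 0) (sharp : (M →ₗ[R] R) →ₗ[R] M)
    (hsharp : ∀ (f : M →ₗ[R] R) (x : M), ω (sharp f) x = f x) (A : Module.End R M)
    (hA : ∀ x y : M, ω (A x) y + ω x (A y) = 0) (f : M →ₗ[R] R) :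
    sharp (f ∘ₗ A) = -A (sharp f) := by
  refine sub_eq_zero.mp (hnondeg _ fun y => ?_)
  have h := hA (sharp f) y
  rw [hsharp] at h
  rw [map_sub, map_neg, LinearMap.sub_apply, LinearMap.neg_apply, hsharp, LinearMap.comp_apply]
  linear_combination h

theorem Module.Basis.sum_apply_tmul_eq_sum_tmul_comp (b : Module.Basis ι R M)
    (A : Module.End R M) (s : (M →ₗ[R] R) →ₗ[R] N) :
    ∑ i, A (b i) ⊗ₜ[R] s (b.coord i) = ∑ i, b i ⊗ₜ[R] s (b.coord i ∘ₗ A) := by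
  have hcoord : ∀ i, b.coord i ∘ₗ A = ∑ j, b.coord i (A (b j)) • b.coord j := fun i =>
    (b.sum_dual_apply_smul_coord _).symm
  simp_rw [hcoord, map_sum, map_smul, TensorProduct.tmul_sum, TensorProduct.tmul_smul]
  rw [Finset.sum_comm]
  refine Finset.sum_congr rfl fun j _ => ?_
  conv_lhs => rw [← b.sum_repr (A (b j))]
  simp only [TensorProduct.sum_tmul, TensorProduct.smul_tmul', Module.Basis.coord_apply]

theorem rTensor_add_lTensor_sharpBivector (ω : M →ₗ[R] M →ₗ[R] R)
    (hnondeg : ∀ x : M, (∀ y : M, ω x y = 0) → x = 0) (b : Module.Basis ι R M)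
    (sharp : (M →ₗ[R] R) →ₗ[R] M) (hsharp : ∀ (f : M →ₗ[R] R) (x : M), ω (sharp f) x = f x)
    (A : Module.End R M) (hA : ∀ x y : M, ω (A x) y + ω x (A y) = 0) :
    (A.rTensor M + A.lTensor M) (sharpBivector b sharp) = 0 := by
  rw [sharpBivector, LinearMap.add_apply, map_sum, map_sum]
  simp only [LinearMap.rTensor_tmul, LinearMap.lTensor_tmul]
  simp only [b.sum_apply_tmul_eq_sum_tmul_comp, sharp_comp_eq_neg ω hnondeg sharp hsharp A hA,
    TensorProduct.tmul_neg, Finset.sum_neg_distrib, neg_add_cancel]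

end Symplectic

theorem LinearMap.rTensor_add_lTensor_apply_rTensor {R M N P : Type*} [CommRing R]
    [AddCommGroup M] [Module R M] [AddCommGroup N] [Module R N] [AddCommGroup P] [Module R P]
    (ρ : P →ₗ[R] P) (φ : M →ₗ[R] P) (A : M →ₗ[R] M) (A' : N →ₗ[R] N) (B : TensorProduct R M N) :
    (ρ.rTensor N + A'.lTensor P) (φ.rTensor N B)
      = (ρ ∘ₗ φ - φ ∘ₗ A).rTensor N B + φ.rTensor N ((A.rTensor N + A'.lTensor M) B) := by
  simp only [LinearMap.add_apply, LinearMap.rTensor_sub, LinearMap.sub_apply, map_add,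
    LinearMap.rTensor_comp_apply, ← LinearMap.comp_apply (A'.lTensor P),
    LinearMap.lTensor_comp_rTensor, ← LinearMap.rTensor_comp_lTensor]
  abel

section RealForms

open AlternatingMap

theorem formAct_eq_neg_slotSum {k : ℕ} (g : V →ₗ[ℝ] V) (α : V [⋀^Fin (k + 1)]→ₗ[ℝ] ℝ) :
    formAct g α = -slotSum g α := by
  have h := card_smul_alternatization_compLinearMap_update α g 0
  rw [Fintype.card_fin, Nat.factorial_succ, mul_smul, ← Nat.cast_smul_eq_nsmul ℝ,
    ← Nat.cast_smul_eq_nsmul ℝ (k + 1)] at h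
  replace h := smul_right_injective _ (Nat.cast_ne_zero.mpr k.succ_ne_zero) h
  have hupdate : (fun j : Fin (k + 1) => if j = 0 then g else LinearMap.id)
      = Function.update (fun _ => LinearMap.id) 0 g :=
    funext fun j => by rw [Function.update_apply]
  change -((k.factorial : ℝ)⁻¹ • MultilinearMap.alternatization
    (α.toMultilinearMap.compLinearMap fun j : Fin (k + 1) => if j = 0 then g else LinearMap.id))
      = _
  rw [hupdate, h, ← Nat.cast_smul_eq_nsmul ℝ,
    inv_smul_smul₀ (Nat.cast_ne_zero.mpr k.factorial_ne_zero)]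

noncomputable def wedgeFormₗ (p q : ℕ) :
    (V [⋀^Fin p]→ₗ[ℝ] ℝ) →ₗ[ℝ] (V [⋀^Fin q]→ₗ[ℝ] ℝ) →ₗ[ℝ] V [⋀^Fin (p + q)]→ₗ[ℝ] ℝ :=
  LinearMap.mk₂ ℝ wedgeForm wedgeForm_add_left wedgeForm_smul_left wedgeForm_add_right
    wedgeForm_smul_right

theorem wedgeForm_neg_left {p q : ℕ} (a : V [⋀^Fin p]→ₗ[ℝ] ℝ) (c : V [⋀^Fin q]→ₗ[ℝ] ℝ) :
    wedgeForm (-a) c = -wedgeForm a c :=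
  (wedgeFormₗ p q).map_neg₂ a c

theorem wedgeForm_neg_right {p q : ℕ} (a : V [⋀^Fin p]→ₗ[ℝ] ℝ) (c : V [⋀^Fin q]→ₗ[ℝ] ℝ) :
    wedgeForm a (-c) = -wedgeForm a c :=
  map_neg (wedgeFormₗ p q a) c

theorem wedgeForm_sub_left {p q : ℕ} (a a' : V [⋀^Fin p]→ₗ[ℝ] ℝ) (c : V [⋀^Fin q]→ₗ[ℝ] ℝ) :
    wedgeForm (a - a') c = wedgeForm a c - wedgeForm a' c :=
  (wedgeFormₗ p q).map_sub₂ a a' c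

theorem wedgeForm_sub_right {p q : ℕ} (a : V [⋀^Fin p]→ₗ[ℝ] ℝ) (c c' : V [⋀^Fin q]→ₗ[ℝ] ℝ) :
    wedgeForm a (c - c') = wedgeForm a c - wedgeForm a c' :=
  map_sub (wedgeFormₗ p q a) c c'

theorem slotSum_wedgeForm {p q : ℕ} (g : V →ₗ[ℝ] V) (a : V [⋀^Fin p]→ₗ[ℝ] ℝ)
    (c : V [⋀^Fin q]→ₗ[ℝ] ℝ) :
    slotSum g (wedgeForm a c) = wedgeForm (slotSum g a) c + wedgeForm a (slotSum g c) := by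
  simp only [wedgeForm, slotSum_domDomCongr, slotSum_compAlternatingMap, slotSum_domCoprod,
    LinearMap.compAlternatingMap_add, domDomCongr_add]

noncomputable def rOmegaSummand (m : ℕ) (α : V [⋀^Fin (m + 2)]→ₗ[ℝ] ℝ)
    (τ : V [⋀^Fin 2]→ₗ[ℝ] ℝ) : V →ₗ[ℝ] V [⋀^Fin (m + 3)]→ₗ[ℝ] ℝ :=
  ((m : ℝ) + 3)⁻¹ • wedgeFormₗ (m + 2) 1 α ∘ₗ τ.curryLeft
    - ((-1 : ℝ) ^ m / (((m : ℝ) + 2) * ((m : ℝ) + 3))) •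
        (wedgeFormₗ (m + 1) 2).flip τ ∘ₗ α.curryLeft

theorem rOmegaSummand_apply (m : ℕ) (α : V [⋀^Fin (m + 2)]→ₗ[ℝ] ℝ) (τ : V [⋀^Fin 2]→ₗ[ℝ] ℝ)
    (x : V) :
    rOmegaSummand m α τ x = ((m : ℝ) + 3)⁻¹ • wedgeForm α (τ.curryLeft x)
      - ((-1 : ℝ) ^ m / (((m : ℝ) + 2) * ((m : ℝ) + 3))) • wedgeForm (α.curryLeft x) τ :=
  rfl

theorem formAct_comp_rOmegaSummand_sub_comp (m : ℕ) (A : Module.End ℝ V)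
    (α : V [⋀^Fin (m + 2)]→ₗ[ℝ] ℝ) (τ : V [⋀^Fin 2]→ₗ[ℝ] ℝ) :
    formAct A ∘ₗ rOmegaSummand m α τ - rOmegaSummand m α τ ∘ₗ A
      = rOmegaSummand m (formAct A α) τ + rOmegaSummand m α (formAct A τ) := by
  refine LinearMap.ext fun x => ?_
  simp only [LinearMap.sub_apply, LinearMap.comp_apply, LinearMap.add_apply, rOmegaSummand_apply,
    formAct_eq_neg_slotSum, map_sub, map_smul]
  rw [slotSum_wedgeForm A (α.curryLeft x) τ, slotSum_wedgeForm A α (τ.curryLeft x)]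
  simp only [slotSum_curryLeft, curryLeft_neg, LinearMap.neg_apply, wedgeForm_neg_left,
    wedgeForm_neg_right, wedgeForm_sub_left, wedgeForm_sub_right]
  module

theorem rOmega_tmul [FiniteDimensional ℝ V] (ω : V →ₗ[ℝ] V →ₗ[ℝ] ℝ) {n : ℕ}
    (b : Module.Basis (Fin n) ℝ V) (sharp : (V →ₗ[ℝ] ℝ) → V) (m : ℕ)
    (α : V [⋀^Fin (m + 2)]→ₗ[ℝ] ℝ) (τ : V [⋀^Fin 2]→ₗ[ℝ] ℝ) :
    rOmega ω b sharp m (α ⊗ₜ τ) = (rOmegaSummand m α τ).rTensor V (sharpBivector b sharp) := by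
  simp only [sharpBivector, map_sum, LinearMap.rTensor_tmul]
  exact TensorProduct.lift.tmul _ _

end RealForms

theorem rOmega_equivariant_general
    [FiniteDimensional ℝ V]
    (ω : V →ₗ[ℝ] V →ₗ[ℝ] ℝ)
    (hnondeg : ∀ x : V, (∀ y : V, ω x y = 0) → x = 0)
    {n : ℕ} (b : Module.Basis (Fin n) ℝ V)
    (sharp : (V →ₗ[ℝ] ℝ) → V) (hsharp : ∀ (f : V →ₗ[ℝ] ℝ) (x : V), ω (sharp f) x = f x)
    (m : ℕ) (A : Module.End ℝ V) (hA : ∀ x y : V, ω (A x) y + ω x (A y) = 0)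
    (ξ : TensorProduct ℝ (V [⋀^Fin (m + 2)]→ₗ[ℝ] ℝ) (V [⋀^Fin 2]→ₗ[ℝ] ℝ)) :
    rOmega ω b sharp m
        ((LinearMap.rTensor (V [⋀^Fin 2]→ₗ[ℝ] ℝ) (formAct (k := m + 1) A) +
          LinearMap.lTensor (V [⋀^Fin (m + 2)]→ₗ[ℝ] ℝ) (formAct (k := 1) A)) ξ)
      = (LinearMap.rTensor V (formAct (k := m + 2) A) +
          LinearMap.lTensor (V [⋀^Fin (m + 3)]→ₗ[ℝ] ℝ) A)
          (rOmega ω b sharp m ξ) := by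
  obtain ⟨sharp, rfl⟩ := exists_linearMap_coe_eq_of_nondegenerate ω hnondeg sharp hsharp
  have hinv := rTensor_add_lTensor_sharpBivector ω hnondeg b sharp hsharp A hA
  induction ξ using TensorProduct.induction_on with
  | zero => simp
  | add ξ η hξ hη => simp only [map_add, hξ, hη]
  | tmul α τ =>
    rw [rOmega_tmul, LinearMap.rTensor_add_lTensor_apply_rTensor _ _ A,
      formAct_comp_rOmegaSummand_sub_comp, hinv, map_zero, add_zero, LinearMap.add_apply,
      LinearMap.rTensor_tmul, LinearMap.lTensor_tmul, map_add, rOmega_tmul,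
      rOmega_tmul ω b _ m α (formAct A τ), LinearMap.rTensor_add, LinearMap.add_apply]

/-- for every `A ∈ sp(V,ω)`, the map `r_p^ω` (for `p = m+2 ≥ 2`) is
`sp(V,ω)`-equivariant: `r_p^ω(A·ξ) = A·(r_p^ω ξ)` for all `ξ ∈ Λ^p V* ⊗ Λ²V*`,
where `A` acts on forms by the natural (co)tensor representation and on `V` by `A`. -/
theorem rOmega_equivariant
    [FiniteDimensional ℝ V]
    (ω : V →ₗ[ℝ] V →ₗ[ℝ] ℝ)
    (hskew : ∀ x y : V, ω x y = -ω y x)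
    (hnondeg : ∀ x : V, (∀ y : V, ω x y = 0) → x = 0)
    {n : ℕ} (b : Module.Basis (Fin n) ℝ V)
    (sharp : (V →ₗ[ℝ] ℝ) → V) (hsharp : ∀ (f : V →ₗ[ℝ] ℝ) (x : V), ω (sharp f) x = f x)
    (m : ℕ) (A : Module.End ℝ V) (hA : ∀ x y : V, ω (A x) y + ω x (A y) = 0)
    (ξ : TensorProduct ℝ (V [⋀^Fin (m + 2)]→ₗ[ℝ] ℝ) (V [⋀^Fin 2]→ₗ[ℝ] ℝ)) :
    rOmega ω b sharp m
        ((LinearMap.rTensor (V [⋀^Fin 2]→ₗ[ℝ] ℝ) (formAct (k := m + 1) A) +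
          LinearMap.lTensor (V [⋀^Fin (m + 2)]→ₗ[ℝ] ℝ) (formAct (k := 1) A)) ξ)
      = (LinearMap.rTensor V (formAct (k := m + 2) A) +
          LinearMap.lTensor (V [⋀^Fin (m + 3)]→ₗ[ℝ] ℝ) A)
          (rOmega ω b sharp m ξ) :=
  rOmega_equivariant_general ω hnondeg b sharp hsharp m A hA ξ
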